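/- arXiv:2011.03335 — 3 statements merged into one kernel-verified Lean document; each statement's English description precedes it below -/
import Mathlib

section
/- Every quasiopen set Q ⊆ ℝⁿ can be written as Q = U ∪ Z where U is open and Z is a quasivariety. -/
open MeasureTheory Set

/-- `Z ⊆ ℝⁿ` is a quasivariety (w.r.t. the clone `Basic`): it is contained in a
countable union of zero sets of not-identically-zero basic functions. -/
def IsQuasivariety (Basic : ∀ n : ℕ, ((Fin n → ℝ) → ℝ) → Prop) (n : ℕ)
    (Z : Set (Fin n → ℝ)) : Prop :=
  ∃ S : Set ((Fin n → ℝ) → ℝ), S.Countable ∧ (∀ h ∈ S, Basic n h ∧ h ≠ 0) ∧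
    Z ⊆ ⋃ h ∈ S, h ⁻¹' {0}

/-- The clone `Basic` is admissible: every not-identically-zero basic function has
zero set of Lebesgue measure zero. -/
def Admissible (Basic : ∀ n : ℕ, ((Fin n → ℝ) → ℝ) → Prop) : Prop :=
  ∀ (n : ℕ) (h : (Fin n → ℝ) → ℝ), Basic n h → h ≠ 0 → volume (h ⁻¹' {0}) = 0

/-- Quasiopen sets of ℝⁿ: smallest class containing open sets and zero sets of basic
functions, closed under countable unions and binary intersections. -/
inductive QuasiOpen (Basic : ∀ n : ℕ, ((Fin n → ℝ) → ℝ) → Prop) :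
    ∀ n : ℕ, Set (Fin n → ℝ) → Prop
  | of_isOpen {n : ℕ} (U : Set (Fin n → ℝ)) : IsOpen U → QuasiOpen Basic n U
  | zeroSet {n : ℕ} (h : (Fin n → ℝ) → ℝ) : Basic n h → QuasiOpen Basic n (h ⁻¹' {0})
  | iUnion {n : ℕ} (Q : ℕ → Set (Fin n → ℝ)) :
      (∀ i, QuasiOpen Basic n (Q i)) → QuasiOpen Basic n (⋃ i, Q i)
  | inter {n : ℕ} (Q₁ Q₂ : Set (Fin n → ℝ)) :
      QuasiOpen Basic n Q₁ → QuasiOpen Basic n Q₂ → QuasiOpen Basic n (Q₁ ∩ Q₂)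

/-! Induct on the generation of `Q`. Zero sets are either all of `ℝⁿ` (for the zero
function) or quasivarieties; countable unions distribute over `U ∪ Z`; and for an
intersection, `(U₁ ∪ Z₁) ∩ (U₂ ∪ Z₂)` is `U₁ ∩ U₂` together with a subset of `Z₁ ∪ Z₂`. -/

section

variable {Basic : ∀ n : ℕ, ((Fin n → ℝ) → ℝ) → Prop} {n : ℕ}

theorem IsQuasivariety.mono {A B : Set (Fin n → ℝ)} (hAB : A ⊆ B)
    (hB : IsQuasivariety Basic n B) : IsQuasivariety Basic n A :=
  let ⟨S, hS, hSbasic, hBS⟩ := hB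
  ⟨S, hS, hSbasic, hAB.trans hBS⟩

theorem isQuasivariety_empty : IsQuasivariety Basic n ∅ :=
  ⟨∅, countable_empty, by simp, empty_subset _⟩

theorem isQuasivariety_zeroSet {h : (Fin n → ℝ) → ℝ} (hb : Basic n h) (hh : h ≠ 0) :
    IsQuasivariety Basic n (h ⁻¹' {0}) :=
  ⟨{h}, countable_singleton h, by simp [hb, hh], by simp⟩

theorem IsQuasivariety.iUnion {ι : Type*} [Countable ι] {Z : ι → Set (Fin n → ℝ)}
    (hZ : ∀ i, IsQuasivariety Basic n (Z i)) : IsQuasivariety Basic n (⋃ i, Z i) := by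
  choose S hS hSbasic hZS using hZ
  refine ⟨⋃ i, S i, countable_iUnion hS, ?_, ?_⟩
  · simp only [mem_iUnion, forall_exists_index]
    exact fun h i hi => hSbasic i h hi
  · exact iUnion_subset fun i => (hZS i).trans (biUnion_subset_biUnion_left (subset_iUnion S i))

theorem IsQuasivariety.union {A B : Set (Fin n → ℝ)} (hA : IsQuasivariety Basic n A)
    (hB : IsQuasivariety Basic n B) : IsQuasivariety Basic n (A ∪ B) := by
  rw [union_eq_iUnion]
  exact IsQuasivariety.iUnion (Bool.forall_bool.2 ⟨hB, hA⟩)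

end

theorem union_inter_union_eq_inter_union_inter {α : Type*} {U₁ U₂ Z₁ Z₂ : Set α} :
    (U₁ ∪ Z₁) ∩ (U₂ ∪ Z₂) = U₁ ∩ U₂ ∪ (U₁ ∪ Z₁) ∩ (U₂ ∪ Z₂) ∩ (Z₁ ∪ Z₂) := by
  ext x
  simp only [mem_union, mem_inter_iff]
  tauto

theorem quasiopen_eq_open_union_quasivariety_general (Basic : ∀ n : ℕ, ((Fin n → ℝ) → ℝ) → Prop)
    (n : ℕ) (Q : Set (Fin n → ℝ))
    (hQ : QuasiOpen Basic n Q) :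
    ∃ (U Z : Set (Fin n → ℝ)), IsOpen U ∧ IsQuasivariety Basic n Z ∧ Q = U ∪ Z := by
  induction hQ with
  | of_isOpen U hU => exact ⟨U, ∅, hU, isQuasivariety_empty, (union_empty U).symm⟩
  | zeroSet h hb =>
    by_cases hh : h = 0
    · subst hh
      exact ⟨univ, ∅, isOpen_univ, isQuasivariety_empty, by ext; simp⟩
    · exact ⟨∅, _, isOpen_empty, isQuasivariety_zeroSet hb hh, (empty_union _).symm⟩
  | iUnion Q _ ih =>
    choose U Z hU hZ hQ using ih
    refine ⟨⋃ i, U i, ⋃ i, Z i, isOpen_iUnion hU, .iUnion hZ, ?_⟩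
    simp only [hQ, iUnion_union_distrib]
  | inter Q₁ Q₂ _ _ ih₁ ih₂ =>
    obtain ⟨U₁, Z₁, hU₁, hZ₁, rfl⟩ := ih₁
    obtain ⟨U₂, Z₂, hU₂, hZ₂, rfl⟩ := ih₂
    exact ⟨U₁ ∩ U₂, _, hU₁.inter hU₂, (hZ₁.union hZ₂).mono inter_subset_right,
      union_inter_union_eq_inter_union_inter⟩

/-- every quasiopen set is the union of an open set and a quasivariety. -/
theorem quasiopen_eq_open_union_quasivariety (Basic : ∀ n : ℕ, ((Fin n → ℝ) → ℝ) → Prop)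
    (hadm : Admissible Basic) (n : ℕ) (Q : Set (Fin n → ℝ))
    (hQ : QuasiOpen Basic n Q) :
    ∃ (U Z : Set (Fin n → ℝ)), IsOpen U ∧ IsQuasivariety Basic n Z ∧ Q = U ∪ Z :=
  quasiopen_eq_open_union_quasivariety_general Basic n Q hQ
end

section
/- The derivative operator is not Scott continuous on the flat domain function space: there exists a directed chain (φₙ)_{n>0} of partial functions ℝ ⇀ ℝ, each differentiable on its domain of differentiability, such that ∂(sup_{n} φₙ) ≠ sup_{n} ∂φₙ, where sup is taken in the pointwise order on partial functions and ∂ takes a partial function to its derivative on its domain of differentiability. -/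
open Filter

/-- The pointwise (information) order on partial functions ℝ ⇀ ℝ:
`F ⊑ G` iff `G` is defined and agrees with `F` wherever `F` is defined. -/
def ple (F G : ℝ →. ℝ) : Prop := ∀ x ∈ F.Dom, F x = G x

/-- The derivative operator on partial functions: `pderiv' F` is defined at `x` iff
`F` agrees, in a neighbourhood of `x`, with some function differentiable at `x`
(i.e. `x` is in the domain of differentiability of `F`), and its value there is the
derivative. -/
noncomputable def pderiv' (F : ℝ →. ℝ) : ℝ →. ℝ := fun x =>
  ⟨∃ g : ℝ → ℝ, DifferentiableAt ℝ g x ∧ ∀ᶠ y in nhds x, F y = Part.some (g y),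
   fun h => deriv h.choose x⟩

/-!
Take `φₙ` to be the zero function restricted to `Iₙ`. Since `pderiv'` only sees the germ of
a partial function, the derivative of a restriction `f|ₛ` of a differentiable `f` is
`(f')|_{interior s}`. Hence the supremum of the derivatives is defined on `⋃ interior Iₙ`,
whereas the derivative of the supremum is defined on `interior (⋃ Iₙ) = ℝ`. The point `0`
separates them: it lies in the closure of every gap `ℝ \ Iₙ = (0, 1/n]`, so in no
`interior Iₙ`, although the gaps have empty intersection.
-/

open Set Topology

namespace PFun

variable {α β : Type*} {f : α → β} {s : Set α} {x : α} {b : β}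

theorem res_eq_some_iff : res f s x = Part.some b ↔ x ∈ s ∧ f x = b :=
  Part.eq_some_iff.trans (mem_res f s x b)

theorem res_eq_some (hx : x ∈ s) : res f s x = Part.some (f x) :=
  res_eq_some_iff.2 ⟨hx, rfl⟩

end PFun

open PFun

section Restriction

variable {f : ℝ → ℝ} {s t : Set ℝ} {G : ℝ →. ℝ}

theorem res_ple_iff : ple (res f s) G ↔ ∀ x ∈ s, G x = Part.some (f x) :=
  forall₂_congr fun _ hx => (res_eq_some hx).symm ▸ eq_comm

theorem res_ple_res (h : s ⊆ t) : ple (res f s) (res f t) :=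
  res_ple_iff.2 fun _ hx => res_eq_some (h hx)

theorem res_iUnion_ple_iff {ι : Sort*} {s : ι → Set ℝ} :
    ple (res f (⋃ i, s i)) G ↔ ∀ i, ple (res f (s i)) G := by
  simp only [res_ple_iff, mem_iUnion, forall_exists_index]
  exact forall_comm

theorem pderiv'_res (hf : Differentiable ℝ f) (s : Set ℝ) :
    pderiv' (res f s) = res (deriv f) (interior s) := by
  funext x
  have h_germ {g : ℝ → ℝ} (hg : ∀ᶠ y in 𝓝 x, res f s y = Part.some (g y)) :
      s ∈ 𝓝 x ∧ g =ᶠ[𝓝 x] f :=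
    ⟨hg.mono fun _ hy => (res_eq_some_iff.1 hy).1,
      hg.mono fun _ hy => (res_eq_some_iff.1 hy).2.symm⟩
  refine Part.ext' ⟨fun ⟨_, _, hg⟩ => mem_interior_iff_mem_nhds.2 (h_germ hg).1,
    fun hx => ⟨f, hf x, ?_⟩⟩ fun h _ => (h_germ h.choose_spec.2).2.deriv_eq
  filter_upwards [mem_interior_iff_mem_nhds.1 hx] with y hy using res_eq_some hy

end Restriction

-- `gap n = ℝ \ Iₙ₊₁`, shifted so that the chain is indexed from `0`.
def gap (n : ℕ) : Set ℝ := Ioc 0 (1 / (n + 1))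

theorem gap_succ_subset (n : ℕ) : gap (n + 1) ⊆ gap n :=
  Ioc_subset_Ioc_right <| by gcongr; linarith

theorem iInter_gap : ⋂ n, gap n = ∅ := by
  refine eq_empty_of_forall_notMem fun x hx => ?_
  have hx_gap : ∀ n, x ∈ gap n := mem_iInter.1 hx
  obtain ⟨n, hn⟩ := exists_nat_one_div_lt (hx_gap 0).1
  exact (hx_gap n).2.not_gt hn

theorem zero_mem_closure_gap (n : ℕ) : (0 : ℝ) ∈ closure (gap n) := by
  have hpos : (0 : ℝ) < 1 / (n + 1) := by positivity
  rw [gap, closure_Ioc hpos.ne]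
  exact left_mem_Icc.2 hpos.le

/-- the derivative operator is not Scott continuous: there is an
increasing chain `φ` of partial functions with least upper bound `Φ`, such that the
least upper bound `Ψ` of the derivatives `pderiv' (φ i)` differs from `pderiv' Φ`. -/
theorem deriv_not_scott_continuous :
    ∃ (φ : ℕ → (ℝ →. ℝ)) (Φ Ψ : ℝ →. ℝ),
      (∀ i, ple (φ i) (φ (i + 1))) ∧
      (∀ i, ple (φ i) Φ) ∧ (∀ G, (∀ i, ple (φ i) G) → ple Φ G) ∧
      (∀ i, ple (pderiv' (φ i)) Ψ) ∧
      (∀ G, (∀ i, ple (pderiv' (φ i)) G) → ple Ψ G) ∧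
      pderiv' Φ ≠ Ψ := by
  have hderiv (s : Set ℝ) :
      pderiv' (res (fun _ => 0) s) = res (fun _ => 0) (interior s) := by
    rw [pderiv'_res (differentiable_const 0), deriv_const']
  refine ⟨fun n => res (fun _ => 0) (gap n)ᶜ, res (fun _ => 0) (⋃ n, (gap n)ᶜ),
    res (fun _ => 0) (⋃ n, interior (gap n)ᶜ), fun n => ?_, fun n => ?_,
    fun _ => res_iUnion_ple_iff.2, fun n => ?_, fun _ => ?_, ?_⟩
  · exact res_ple_res (compl_subset_compl.2 (gap_succ_subset n))
  · exact res_ple_res (subset_iUnion (fun n => (gap n)ᶜ) n)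
  · rw [hderiv]
    exact res_ple_res (subset_iUnion (fun n => interior (gap n)ᶜ) n)
  · simpa only [hderiv] using res_iUnion_ple_iff.2
  rw [hderiv, ← compl_iInter, iInter_gap, compl_empty, interior_univ]
  intro h
  have h_dom : univ = ⋃ n, interior (gap n)ᶜ := congrArg PFun.Dom h
  obtain ⟨n, hn⟩ := mem_iUnion.1 (h_dom ▸ mem_univ (0 : ℝ))
  rw [interior_compl] at hn
  exact hn (zero_mem_closure_gap n)
end

section
/- Conditional combination preserves complete quasicontinuity: let P : ℝⁿ ⇀ ℝ, f, g : ℝⁿ ⇀ ℝᵐ be completely quasicontinuous, and define h : ℝⁿ ⇀ ℝᵐ by h(x) = f(x) if P(x) ≤ 0, h(x) = g(x) if P(x) > 0, and h(x) undefined if P(x) is undefined (h(x) is also undefined when the selected branch is undefined). Then h is completely quasicontinuous. -/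
open MeasureTheory Set

/-- Left component of a splitting ℝ^{l+n} ≅ ℝˡ × ℝⁿ. -/
def splitL {l n : ℕ} (x : Fin (l + n) → ℝ) : Fin l → ℝ := fun i => x (Fin.castAdd n i)

/-- Right component of a splitting ℝ^{l+n} ≅ ℝˡ × ℝⁿ. -/
def splitR {l n : ℕ} (x : Fin (l + n) → ℝ) : Fin n → ℝ := fun j => x (Fin.natAdd l j)

/-- The partial function `id_{ℝˡ} × f : ℝ^{l+n} ⇀ ℝ^{l+m}`. -/
def idProd (l : ℕ) {n m : ℕ} (f : (Fin n → ℝ) →. (Fin m → ℝ)) :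
    (Fin (l + n) → ℝ) →. (Fin (l + m) → ℝ) :=
  fun x => (f (splitR x)).map (fun y => Fin.append (splitL x) y)

/-- A partial function is quasicontinuous if preimages of quasiopen sets are
quasiopen.  (The preimage of a partial function consists of the points where it is
defined with value in the given set.) -/
def QuasiCont (Basic : ∀ n : ℕ, ((Fin n → ℝ) → ℝ) → Prop) {n m : ℕ}
    (f : (Fin n → ℝ) →. (Fin m → ℝ)) : Prop :=
  ∀ Q : Set (Fin m → ℝ), QuasiOpen Basic m Q → QuasiOpen Basic n (f.preimage Q)

/-- A partial function is completely quasicontinuous (cqc) if `id_{ℝˡ} × f` is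
quasicontinuous for every `l` (including `l = 0`, i.e. `f` itself). -/
def CQC (Basic : ∀ n : ℕ, ((Fin n → ℝ) → ℝ) → Prop) {n m : ℕ}
    (f : (Fin n → ℝ) →. (Fin m → ℝ)) : Prop :=
  QuasiCont Basic f ∧ ∀ l : ℕ, QuasiCont Basic (idProd l f)

/-!
On the part of its domain where `P ≤ 0` the combined function agrees with `f`, elsewhere
with `g`, so the preimage of a quasiopen `Q` is
`(P⁻¹{≤ 0} ∩ f⁻¹ Q) ∪ (P⁻¹{> 0} ∩ g⁻¹ Q)`; here `{v | v 0 ≤ 0}` is quasiopen as the union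
of an open set and the zero set of a projection. Since `id_{ℝˡ} × h` is again a
conditional combination of `id_{ℝˡ} × P`, `id_{ℝˡ} × f`, `id_{ℝˡ} × g`, the same argument
gives complete quasicontinuity.
-/

namespace QuasiOpen

variable {Basic : ∀ n : ℕ, ((Fin n → ℝ) → ℝ) → Prop} {k : ℕ}

theorem union {A B : Set (Fin k → ℝ)} (hA : QuasiOpen Basic k A) (hB : QuasiOpen Basic k B) :
    QuasiOpen Basic k (A ∪ B) := by
  have hAB : A ∪ B = ⋃ i : ℕ, if i = 0 then A else B := by
    ext x
    simp only [mem_union, mem_iUnion]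
    refine ⟨fun h => h.elim (fun hx => ⟨0, by simpa⟩) (fun hx => ⟨1, by simpa⟩), ?_⟩
    rintro ⟨i, hi⟩
    split_ifs at hi <;> simp [hi]
  rw [hAB]
  exact iUnion _ fun i => by split_ifs <;> assumption

theorem setOf_apply_nonpos (hproj : ∀ (k : ℕ) (i : Fin k), Basic k (fun x => x i)) (i : Fin k) :
    QuasiOpen Basic k {z | z i ≤ 0} := by
  have hsplit : {z : Fin k → ℝ | z i ≤ 0} = {z | z i < 0} ∪ (fun z => z i) ⁻¹' {0} := by
    ext z
    simp only [mem_ofPred_eq, mem_union, mem_preimage, mem_singleton_iff]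
    exact le_iff_lt_or_eq
  rw [hsplit]
  exact (of_isOpen _ (isOpen_lt (continuous_apply i) continuous_const)).union
    (zeroSet _ (hproj k i))

theorem setOf_not_apply_nonpos (i : Fin k) : QuasiOpen Basic k {z | ¬ z i ≤ 0} := by
  simp only [not_le]
  exact of_isOpen _ (isOpen_lt continuous_const (continuous_apply i))

end QuasiOpen

theorem PFun.preimage_bind_ite {α β γ : Type*} (p : α →. β) (f g : α →. γ) (c : β → Prop)
    [DecidablePred c] (Q : Set γ) :
    PFun.preimage (fun x => (p x).bind fun v => if c v then f x else g x) Q =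
      (p.preimage {v | c v} ∩ f.preimage Q) ∪ (p.preimage {v | ¬ c v} ∩ g.preimage Q) := by
  ext x
  change (∃ y ∈ Q, y ∈ (p x).bind fun v => if c v then f x else g x) ↔ _
  simp only [Part.mem_bind_iff, mem_union, mem_inter_iff, PFun.mem_preimage, mem_ofPred_eq]
  constructor
  · rintro ⟨y, hyQ, v, hv, hy⟩
    by_cases hc : c v
    · exact Or.inl ⟨⟨v, hc, hv⟩, y, hyQ, by rwa [if_pos hc] at hy⟩
    · exact Or.inr ⟨⟨v, hc, hv⟩, y, hyQ, by rwa [if_neg hc] at hy⟩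
  · rintro (⟨⟨v, hc, hv⟩, y, hyQ, hy⟩ | ⟨⟨v, hc, hv⟩, y, hyQ, hy⟩)
    · exact ⟨y, hyQ, v, hv, by rwa [if_pos hc]⟩
    · exact ⟨y, hyQ, v, hv, by rwa [if_neg hc]⟩

theorem idProd_bind_ite (l : ℕ) {n j m : ℕ} (p : (Fin n → ℝ) →. (Fin j → ℝ))
    (f g : (Fin n → ℝ) →. (Fin m → ℝ)) (c : (Fin j → ℝ) → Prop) [DecidablePred c] :
    idProd l (fun x => (p x).bind fun v => if c v then f x else g x) =
      fun x => (idProd l p x).bind fun w =>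
        if c (splitR w) then idProd l f x else idProd l g x := by
  funext x
  have hsplitR (v : Fin j → ℝ) : splitR (Fin.append (splitL x) v) = v :=
    funext fun i => Fin.append_right _ _ i
  simp only [idProd, Part.map_bind, Part.bind_map, hsplitR, apply_ite]

theorem QuasiCont.bind_ite {Basic : ∀ n : ℕ, ((Fin n → ℝ) → ℝ) → Prop} {k j m : ℕ}
    {p : (Fin k → ℝ) →. (Fin j → ℝ)} {f g : (Fin k → ℝ) →. (Fin m → ℝ)}
    {c : (Fin j → ℝ) → Prop} [DecidablePred c]
    (hc : QuasiOpen Basic j {v | c v}) (hnc : QuasiOpen Basic j {v | ¬ c v})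
    (hp : QuasiCont Basic p) (hf : QuasiCont Basic f) (hg : QuasiCont Basic g) :
    QuasiCont Basic (fun x => (p x).bind fun v => if c v then f x else g x) := by
  intro Q hQ
  rw [PFun.preimage_bind_ite]
  exact ((hp _ hc).inter _ _ (hf _ hQ)).union ((hp _ hnc).inter _ _ (hg _ hQ))

theorem cqc_ite_general (Basic : ∀ n : ℕ, ((Fin n → ℝ) → ℝ) → Prop)
    (hproj : ∀ (k : ℕ) (i : Fin k), Basic k (fun x => x i)) (n m : ℕ)
    (P : (Fin n → ℝ) →. (Fin 1 → ℝ)) (f g : (Fin n → ℝ) →. (Fin m → ℝ))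
    (hP : CQC Basic P) (hf : CQC Basic f) (hg : CQC Basic g) :
    CQC Basic (fun x => (P x).bind (fun v => if v 0 ≤ 0 then f x else g x)) := by
  refine ⟨QuasiCont.bind_ite (QuasiOpen.setOf_apply_nonpos hproj 0)
    (QuasiOpen.setOf_not_apply_nonpos 0) hP.1 hf.1 hg.1, fun l => ?_⟩
  rw [idProd_bind_ite]
  -- `splitR w 0` unfolds to the coordinate `w (Fin.natAdd l 0)`.
  exact QuasiCont.bind_ite (c := fun w => splitR w 0 ≤ 0)
    (QuasiOpen.setOf_apply_nonpos hproj _) (QuasiOpen.setOf_not_apply_nonpos _)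
    (hP.2 l) (hf.2 l) (hg.2 l)

/-- conditional combination preserves complete quasicontinuity.
With `P : ℝⁿ ⇀ ℝ` (ℝ ≅ Fin 1 → ℝ) and `f, g : ℝⁿ ⇀ ℝᵐ` all cqc, the partial
function `h` with `h x = f x` if `P x ≤ 0`, `h x = g x` if `P x > 0`, and undefined
when `P x` (or the selected branch) is undefined, is cqc.  The admissible clone is
assumed to contain all projections. -/
theorem cqc_ite (Basic : ∀ n : ℕ, ((Fin n → ℝ) → ℝ) → Prop)
    (hadm : Admissible Basic)
    (hproj : ∀ (k : ℕ) (i : Fin k), Basic k (fun x => x i)) (n m : ℕ)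
    (P : (Fin n → ℝ) →. (Fin 1 → ℝ)) (f g : (Fin n → ℝ) →. (Fin m → ℝ))
    (hP : CQC Basic P) (hf : CQC Basic f) (hg : CQC Basic g) :
    CQC Basic (fun x => (P x).bind (fun v => if v 0 ≤ 0 then f x else g x)) :=
  cqc_ite_general Basic hproj n m P f g hP hf hg
end
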